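/- Let ω ∈ ℝ∖ℚ, and set q'_i the elements of U = {q_j : q_{j+1} ≥ (q_j+1)²} in increasing order, n_i = ⌊q'_{i+1}/(q'_i+1)⌋, α_i = n_i q'_i / q'_{i+1}. Then 1 ≥ α_i ≥ (1 − 1/(q'_i+1))² for all i, and the infinite product ∏_{i≥0} α_i converges to a strictly positive constant. -/

import Mathlib

/-!
Writing `n_i = ⌊q'_{i+1}/(q'_i+1)⌋`, one has `(q'_i+1) n_i ≤ q'_{i+1} ≤ (q'_i+1) n_i + q'_i`, and
together with `q'_{i+1} ≥ (q'_i+1)²` this pins `α_i` between `(1 - 1/(q'_i+1))²` and `1`.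
Since `q'_{i+1} + 1 ≥ 2 (q'_i + 1)`, the series `∑ 1/(q'_i+1)` converges, so the bound
`2 log (1 - 1/(q'_i+1)) ≤ log α_i ≤ 0` makes `∑ log α_i` converge, and `∏ α_i` tends to the
exponential of its sum.
-/

open Finset Filter


/-- The iterated fractional parts of the Gauss continued fraction algorithm:
`gaussIter ω n = ω_n`. -/
noncomputable def gaussIter (ω : ℝ) : ℕ → ℝ
  | 0 => Int.fract ω
  | n + 1 => Int.fract (gaussIter ω n)⁻¹

/-- The partial quotients of the Gauss continued fraction algorithm:
`cfA ω 0 = a₀ = ⌊ω⌋`, `cfA ω (n+1) = a_{n+1} = ⌊1/ω_n⌋`. -/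
noncomputable def cfA (ω : ℝ) : ℕ → ℤ
  | 0 => ⌊ω⌋
  | n + 1 => ⌊(gaussIter ω n)⁻¹⌋

/-- Denominators of the convergents: `q₋₂ = 1`, `q₋₁ = 0`, `q_n = a_n q_{n-1} + q_{n-2}`
(so `q₀ = 1`, `q₁ = a₁`). They are positive integers. -/
noncomputable def qden (ω : ℝ) : ℕ → ℕ
  | 0 => 1
  | 1 => (cfA ω 1).toNat
  | n + 2 => (cfA ω (n + 2)).toNat * qden ω (n + 1) + qden ω n

/-- Numerators of the convergents: `p₋₂ = 0`, `p₋₁ = 1`, `p_n = a_n p_{n-1} + p_{n-2}`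
(so `p₀ = a₀`, `p₁ = a₁ a₀ + 1`). -/
noncomputable def pnum (ω : ℝ) : ℕ → ℤ
  | 0 => cfA ω 0
  | 1 => cfA ω 1 * cfA ω 0 + 1
  | n + 2 => cfA ω (n + 2) * pnum ω (n + 1) + pnum ω n

/-- The denominators viewed as real numbers. -/
noncomputable def qr (ω : ℝ) (n : ℕ) : ℝ := (qden ω n : ℝ)

theorem irrational_gaussIter {ω : ℝ} (hω : Irrational ω) : ∀ n, Irrational (gaussIter ω n)
  | 0 => hω.sub_intCast ⌊ω⌋
  | n + 1 => (irrational_gaussIter hω n).inv.sub_intCast _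

theorem gaussIter_pos {ω : ℝ} (hω : Irrational ω) (n : ℕ) : 0 < gaussIter ω n := by
  cases n with
  | zero => exact Int.fract_pos.2 (hω.ne_int _)
  | succ n => exact Int.fract_pos.2 ((irrational_gaussIter hω n).inv.ne_int _)

theorem one_le_cfA_succ {ω : ℝ} (hω : Irrational ω) (n : ℕ) : 1 ≤ cfA ω (n + 1) := by
  have h : 1 ≤ (gaussIter ω n)⁻¹ :=
    (one_le_inv₀ (gaussIter_pos hω n)).2 (by cases n <;> exact (Int.fract_lt_one _).le)
  exact Int.le_floor.2 (by exact_mod_cast h)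

theorem qden_monotone {ω : ℝ} (hω : Irrational ω) : Monotone (qden ω) := by
  refine monotone_nat_of_le_succ fun n => ?_
  cases n with
  | zero =>
    have h : 1 ≤ cfA ω 1 := one_le_cfA_succ hω 0
    simp only [qden]; omega
  | succ n =>
    have h : 1 ≤ cfA ω (n + 2) := one_le_cfA_succ hω (n + 1)
    show qden ω (n + 1) ≤ (cfA ω (n + 2)).toNat * qden ω (n + 1) + qden ω n
    have : 1 ≤ (cfA ω (n + 2)).toNat := by omega
    nlinarith

theorem one_le_qden {ω : ℝ} (hω : Irrational ω) (n : ℕ) : 1 ≤ qden ω n :=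
  qden_monotone hω n.zero_le

/-- The paper's `α_i`, with `A = q'_i` and `B = q'_{i+1}`. -/
noncomputable def alphaRatio (A B : ℕ) : ℝ := ((B / (A + 1) : ℕ) : ℝ) * A / B

theorem alphaRatio_le_one (A B : ℕ) : alphaRatio A B ≤ 1 := by
  have h : B / (A + 1) * A ≤ B :=
    (Nat.mul_le_mul_left _ A.le_succ).trans (Nat.div_mul_le_self B (A + 1))
  exact div_le_one_of_le₀ (by exact_mod_cast h) B.cast_nonneg

theorem sq_one_sub_inv_le_alphaRatio {A B : ℕ} (hB : (A + 1) ^ 2 ≤ B) :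
    (1 - 1 / ((A : ℝ) + 1)) ^ 2 ≤ alphaRatio A B := by
  have hn : B ≤ (A + 1) * (B / (A + 1)) + A := by
    have := Nat.div_add_mod B (A + 1)
    have := Nat.mod_lt B (Nat.add_one_pos A)
    omega
  have hA : (0 : ℝ) < (A : ℝ) + 1 := by positivity
  have hBpos : (0 : ℝ) < B := by exact_mod_cast (Nat.pos_of_ne_zero (by positivity)).trans_le hB
  have hB' : ((A : ℝ) + 1) ^ 2 ≤ B := by exact_mod_cast hB
  have hn' : (B : ℝ) ≤ ((A : ℝ) + 1) * ((B / (A + 1) : ℕ) : ℝ) + A := by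
    exact_mod_cast hn
  rw [alphaRatio, one_sub_div hA.ne', add_sub_cancel_right, div_pow,
    div_le_div_iff₀ (by positivity) hBpos]
  nlinarith [mul_le_mul_of_nonneg_left hn' (by positivity : (0 : ℝ) ≤ A ^ 2),
    mul_le_mul_of_nonneg_left hB' (A.cast_nonneg : (0 : ℝ) ≤ A)]

theorem two_pow_le_succ_of_sq_succ_le {a : ℕ → ℕ} (h : ∀ i, (a i + 1) ^ 2 ≤ a (i + 1)) (i : ℕ) :
    2 ^ i ≤ a i + 1 := by
  induction i with
  | zero => simp
  | succ i ih => rw [pow_succ]; nlinarith [h i]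

theorem summable_one_div_succ_of_sq_succ_le {a : ℕ → ℕ} (h : ∀ i, (a i + 1) ^ 2 ≤ a (i + 1)) :
    Summable fun i => 1 / ((a i : ℝ) + 1) := by
  refine summable_geometric_two.of_nonneg_of_le (fun i => by positivity) fun i => ?_
  rw [one_div_pow]
  exact one_div_le_one_div_of_le (by positivity)
    (by exact_mod_cast two_pow_le_succ_of_sq_succ_le h i)

theorem exists_pos_tendsto_prod_range_of_sq_one_sub_le {f t : ℕ → ℝ} (ht : Summable t)
    (ht1 : ∀ i, t i ≠ 1) (hlo : ∀ i, (1 - t i) ^ 2 ≤ f i) (hhi : ∀ i, f i ≤ 1) :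
    ∃ c, 0 < c ∧ Tendsto (fun N => ∏ i ∈ range N, f i) atTop (nhds c) := by
  have hsq : ∀ i, 0 < (1 - t i) ^ 2 := fun i => sq_pos_of_ne_zero (sub_ne_zero.2 (ht1 i).symm)
  have hpos : ∀ i, 0 < f i := fun i => (hsq i).trans_le (hlo i)
  have hlog : Summable fun i => Real.log (f i) := by
    refine ((Real.summable_log_one_add_of_summable ht.neg).abs.mul_left 2).of_norm_bounded
      fun i => ?_
    have hlow : 2 * Real.log (1 + -t i) ≤ Real.log (f i) := by
      have h := Real.log_le_log (hsq i) (hlo i)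
      rwa [Real.log_pow, Nat.cast_ofNat, sub_eq_add_neg] at h
    rw [Real.norm_eq_abs, abs_of_nonpos (Real.log_nonpos (hpos i).le (hhi i))]
    linarith [neg_abs_le (Real.log (1 + -t i))]
  obtain ⟨L, hL⟩ := hlog
  exact ⟨_, Real.exp_pos L, (Real.hasProd_of_hasSum_log hpos hL).tendsto_prod_nat⟩

theorem stmt17_general (ω : ℝ) (hω : Irrational ω)
    (j : ℕ → ℕ) (hjmono : StrictMono j)
    (hjU : ∀ i : ℕ, (qden ω (j i) + 1) ^ 2 ≤ qden ω (j i + 1)) :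
    (∀ i : ℕ,
      ((qden ω (j (i + 1)) / (qden ω (j i) + 1) : ℕ) : ℝ) * qr ω (j i) / qr ω (j (i + 1)) ≤ 1 ∧
      (1 - 1 / (qr ω (j i) + 1)) ^ 2 ≤
        ((qden ω (j (i + 1)) / (qden ω (j i) + 1) : ℕ) : ℝ) * qr ω (j i) / qr ω (j (i + 1))) ∧
    ∃ cst : ℝ, 0 < cst ∧
      Tendsto (fun N : ℕ => ∏ i ∈ Finset.range N,
          ((qden ω (j (i + 1)) / (qden ω (j i) + 1) : ℕ) : ℝ) * qr ω (j i) / qr ω (j (i + 1)))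
        atTop (nhds cst) := by
  have hgrowth : ∀ i, (qden ω (j i) + 1) ^ 2 ≤ qden ω (j (i + 1)) := fun i =>
    (hjU i).trans (qden_monotone hω (hjmono i.lt_succ_self))
  have hbounds : ∀ i, alphaRatio (qden ω (j i)) (qden ω (j (i + 1))) ≤ 1 ∧
      (1 - 1 / ((qden ω (j i) : ℝ) + 1)) ^ 2 ≤ alphaRatio (qden ω (j i)) (qden ω (j (i + 1))) :=
    fun i => ⟨alphaRatio_le_one _ _, sq_one_sub_inv_le_alphaRatio (hgrowth i)⟩
  have hne : ∀ i, 1 / ((qden ω (j i) : ℝ) + 1) ≠ 1 := fun i => by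
    have := one_le_qden hω (j i)
    rw [Ne, div_eq_one_iff_eq (by positivity)]
    exact_mod_cast (by omega : 1 ≠ qden ω (j i) + 1)
  exact ⟨hbounds, exists_pos_tendsto_prod_range_of_sq_one_sub_le
    (summable_one_div_succ_of_sq_succ_le hgrowth) hne (fun i => (hbounds i).2)
    (fun i => (hbounds i).1)⟩

/-- with `q'_i = q_{j(i)}` enumerating `U = {q_j : q_{j+1} ≥ (q_j+1)²}`
in increasing order, `n_i = ⌊q'_{i+1}/(q'_i+1)⌋` and `α_i = n_i q'_i/q'_{i+1}`,
one has `1 ≥ α_i ≥ (1 - 1/(q'_i+1))²` and `∏_{i≥0} α_i` converges to a strictly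
positive constant. -/
theorem stmt17 (ω : ℝ) (hω : Irrational ω)
    (j : ℕ → ℕ) (hjmono : StrictMono j)
    (hjU : ∀ i : ℕ, (qden ω (j i) + 1) ^ 2 ≤ qden ω (j i + 1))
    (hjall : ∀ l : ℕ, (qden ω l + 1) ^ 2 ≤ qden ω (l + 1) → ∃ i, j i = l) :
    (∀ i : ℕ,
      ((qden ω (j (i + 1)) / (qden ω (j i) + 1) : ℕ) : ℝ) * qr ω (j i) / qr ω (j (i + 1)) ≤ 1 ∧
      (1 - 1 / (qr ω (j i) + 1)) ^ 2 ≤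
        ((qden ω (j (i + 1)) / (qden ω (j i) + 1) : ℕ) : ℝ) * qr ω (j i) / qr ω (j (i + 1))) ∧
    ∃ cst : ℝ, 0 < cst ∧
      Tendsto (fun N : ℕ => ∏ i ∈ Finset.range N,
          ((qden ω (j (i + 1)) / (qden ω (j i) + 1) : ℕ) : ℝ) * qr ω (j i) / qr ω (j (i + 1)))
        atTop (nhds cst) :=
  stmt17_general ω hω j hjmono hjU
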